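/- Let m, n be integers with |m| = |n| ≥ 2 and let Λ ≤ BS(m,n) be a subgroup of infinite index such that the action of the cyclic subgroup ⟨b⟩ on the coset space Λ\BS(m,n) has only finitely many orbits. Then the right-translation action of BS(m,n) on Λ\BS(m,n) is not faithful: its kernel is a nontrivial normal subgroup of BS(m,n). -/
import Mathlib

/-- The single Baumslag–Solitar relator `t b^m t⁻¹ b^{-n}` in the free group on two
generators (`false ↦ b`, `true ↦ t`). -/
def BSrel (m n : ℤ) : Set (FreeGroup Bool) :=
  {FreeGroup.of true * FreeGroup.of false ^ m * (FreeGroup.of true)⁻¹ *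
    (FreeGroup.of false ^ n)⁻¹}

/-- The Baumslag–Solitar group `BS(m,n) = ⟨b, t ∣ t b^m t⁻¹ = b^n⟩`. -/
abbrev BS (m n : ℤ) : Type := PresentedGroup (BSrel m n)

/-- The generator `b` of `BS(m,n)`. -/
def bGen (m n : ℤ) : BS m n := PresentedGroup.of false

/-- The space of right cosets `Λ\Γ`. -/
def rQuot {Γ : Type*} [Group Γ] (Λ : Subgroup Γ) : Type _ :=
  Quotient (QuotientGroup.rightRel Λ)

/-- The right-translation action of `Γ` on the right coset space `Λ\Γ`:
`Λx · γ = Λxγ`. -/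
def rAct {Γ : Type*} [Group Γ] (Λ : Subgroup Γ) (γ : Γ) : rQuot Λ → rQuot Λ :=
  Quotient.map' (fun x => x * γ) (by
    intro x y h
    rw [QuotientGroup.rightRel_apply] at h ⊢
    have key : y * γ * (x * γ)⁻¹ = y * x⁻¹ := by group
    rw [key]; exact h)

namespace BSaux

open Monoid

/-! ### Generalities -/

lemma conj_zpow' {G : Type*} [Group G] (g h : G) (k : ℤ) :
    g * h ^ k * g⁻¹ = (g * h * g⁻¹) ^ k := by
  simpa [MulAut.conj_apply] using (map_zpow (MulAut.conj g) h k)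

lemma comm_aux {G : Type*} [Group G] (a c z₁ z₂ : G)
    (h1 : z₁ * c = c * z₁) (h2 : z₁ * z₂ = z₂ * z₁) (h3 : z₂ * a = a * z₂) :
    (a * z₁) * (c * z₂) * (a * z₁)⁻¹ * (c * z₂)⁻¹ = a * c * a⁻¹ * c⁻¹ := by
  have h3' : z₂ * a⁻¹ = a⁻¹ * z₂ := by
    have := congrArg (fun x => a⁻¹ * x * a⁻¹) h3
    simpa [mul_assoc] using this.symm
  simp only [mul_inv_rev]
  calc a * z₁ * (c * z₂) * (z₁⁻¹ * a⁻¹) * (z₂⁻¹ * c⁻¹)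
      = a * (z₁ * c) * z₂ * z₁⁻¹ * a⁻¹ * z₂⁻¹ * c⁻¹ := by simp [mul_assoc]
    _ = a * (c * z₁) * z₂ * z₁⁻¹ * a⁻¹ * z₂⁻¹ * c⁻¹ := by rw [h1]
    _ = a * c * (z₁ * z₂) * z₁⁻¹ * a⁻¹ * z₂⁻¹ * c⁻¹ := by simp [mul_assoc]
    _ = a * c * (z₂ * z₁) * z₁⁻¹ * a⁻¹ * z₂⁻¹ * c⁻¹ := by rw [h2]
    _ = a * c * (z₂ * a⁻¹) * z₂⁻¹ * c⁻¹ := by simp [mul_assoc]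
    _ = a * c * (a⁻¹ * z₂) * z₂⁻¹ * c⁻¹ := by rw [h3']
    _ = a * c * a⁻¹ * c⁻¹ := by simp [mul_assoc]

/-- products of nonempty reduced words in a free product are nontrivial -/
lemma neword_prod_ne_one {ι : Type*} [DecidableEq ι] {M : ι → Type*} [∀ i, Group (M i)]
    [∀ i, DecidableEq (M i)] {i j : ι} (w : CoprodI.NeWord M i j) : w.prod ≠ 1 := by
  intro h
  have h1 : CoprodI.Word.prod w.toWord = 1 := h
  have e1 : (CoprodI.Word.equiv (M := M)).symm w.toWord =
      (CoprodI.Word.equiv (M := M)).symm CoprodI.Word.empty := by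
    show CoprodI.Word.prod w.toWord = CoprodI.Word.prod CoprodI.Word.empty
    rw [CoprodI.Word.prod_empty]; exact h1
  have h2 := (CoprodI.Word.equiv (M := M)).symm.injective e1
  exact w.toList_ne_nil (congrArg CoprodI.Word.toList h2)

lemma commutator_of_ne_one {ι : Type*} [DecidableEq ι] {M : ι → Type*} [∀ i, Group (M i)]
    [∀ i, DecidableEq (M i)] {i j : ι} (hij : i ≠ j) {a : M i} {b : M j}
    (ha : a ≠ 1) (hb : b ≠ 1) :
    CoprodI.of a * (CoprodI.of b * CoprodI.of a * (CoprodI.of b)⁻¹) * (CoprodI.of a)⁻¹ *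
      (CoprodI.of b * CoprodI.of a * (CoprodI.of b)⁻¹)⁻¹ ≠ 1 := by
  have ha' : a⁻¹ ≠ 1 := inv_ne_one.mpr ha
  have hb' : b⁻¹ ≠ 1 := inv_ne_one.mpr hb
  let W : CoprodI.NeWord M i j :=
    .append (.append (.append (.append (.append (.append (.append
      (.singleton a ha) hij (.singleton b hb)) hij.symm (.singleton a ha)) hij
      (.singleton b⁻¹ hb')) hij.symm (.singleton a⁻¹ ha')) hij
      (.singleton b hb)) hij.symm (.singleton a⁻¹ ha')) hij (.singleton b⁻¹ hb')
  have hW : W.prod = CoprodI.of a * (CoprodI.of b * CoprodI.of a * (CoprodI.of b)⁻¹) *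
      (CoprodI.of a)⁻¹ * (CoprodI.of b * CoprodI.of a * (CoprodI.of b)⁻¹)⁻¹ := by
    simp only [W, CoprodI.NeWord.append_prod, CoprodI.NeWord.prod_singleton, map_inv]
    group
  exact fun h => neword_prod_ne_one W (hW.trans h)

/-! ### Basic facts about `BS(m,n)` -/

def tGen (m n : ℤ) : BS m n := PresentedGroup.of true

lemma relation (m n : ℤ) :
    tGen m n * bGen m n ^ m * (tGen m n)⁻¹ * (bGen m n ^ n)⁻¹ = 1 := by
  have h : (FreeGroup.of true * FreeGroup.of false ^ m * (FreeGroup.of true)⁻¹ *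
      (FreeGroup.of false ^ n)⁻¹) ∈ Subgroup.normalClosure (BSrel m n) :=
    Subgroup.subset_normalClosure rfl
  have h2 : PresentedGroup.mk (BSrel m n) (FreeGroup.of true * FreeGroup.of false ^ m *
      (FreeGroup.of true)⁻¹ * (FreeGroup.of false ^ n)⁻¹) = 1 :=
    (QuotientGroup.eq_one_iff _).mpr h
  simpa [map_mul, map_zpow, map_inv, tGen, bGen, PresentedGroup.of] using h2

lemma t_conj (m n : ℤ) :
    tGen m n * bGen m n ^ m * (tGen m n)⁻¹ = bGen m n ^ n :=
  mul_inv_eq_one.mp (relation m n)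

/-- the sign `n/m` -/
def eps (m n : ℤ) : ℤˣ := if n = m then 1 else -1

lemma eps_mul (m n : ℤ) (hmn : n = m ∨ n = -m) : ((eps m n : ℤˣ) : ℤ) * m = n := by
  by_cases h : n = m
  · simp [eps, h]
  · have hn : n = -m := hmn.resolve_left h
    simp only [eps, if_neg h, Units.val_neg, Units.val_one]
    omega

/-- the character to `ℤˣ`, `b ↦ 1`, `t ↦ ε` -/
def chi (m n : ℤ) : BS m n →* ℤˣ :=
  PresentedGroup.toGroup (f := fun i => if i then eps m n else 1)
    (by
      intro r hr
      rcases hr with rfl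
      simp [map_mul, map_zpow, map_inv])

@[simp] lemma chi_b : chi m n (bGen m n) = 1 := by
  simp [chi, bGen, PresentedGroup.toGroup.of]

@[simp] lemma chi_t : chi m n (tGen m n) = eps m n := by
  simp [chi, tGen, PresentedGroup.toGroup.of]

lemma conj_bm (m n : ℤ) (hmn : n = m ∨ n = -m) (g : BS m n) :
    g * bGen m n ^ m * g⁻¹ = bGen m n ^ (((chi m n g) : ℤ) * m) := by
  set b := bGen m n with hb
  let S : Subgroup (BS m n) :=
    { carrier := {g | g * b ^ m * g⁻¹ = b ^ (((chi m n g) : ℤ) * m)}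
      one_mem' := by simp
      mul_mem' := by
        intro a c ha hc
        simp only [Set.mem_setOf_eq] at ha hc ⊢
        have h1 : (a * c) * b ^ m * (a * c)⁻¹ = a * (c * b ^ m * c⁻¹) * a⁻¹ := by group
        rw [h1, hc]
        have h2 : ((chi m n c : ℤ) * m) = m * (chi m n c : ℤ) := mul_comm _ _
        rw [h2, zpow_mul, conj_zpow', ha, ← zpow_mul]
        congr 1
        rw [map_mul, Units.val_mul]; ring
      inv_mem' := by
        intro a ha
        simp only [Set.mem_setOf_eq] at ha ⊢
        set u := chi m n a with hu
        have huu : (u : ℤ) * (u : ℤ) = 1 := by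
          have h := congrArg (Units.val) (Int.units_mul_self u)
          simpa using h
        have hrev : a⁻¹ * b ^ ((u : ℤ) * m) * a = b ^ m := by
          rw [← ha]; group
        have hbm : b ^ m = (b ^ ((u : ℤ) * m)) ^ (u : ℤ) := by
          rw [← zpow_mul]
          congr 1
          rw [mul_comm ((u : ℤ)) m, mul_assoc, huu, mul_one]
        have hkey : a⁻¹ * b ^ m * a = b ^ ((u : ℤ) * m) := by
          rw [hbm]
          calc a⁻¹ * (b ^ ((u : ℤ) * m)) ^ (u : ℤ) * a
              = a⁻¹ * (b ^ ((u : ℤ) * m)) ^ (u : ℤ) * a⁻¹⁻¹ := by rw [inv_inv]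
            _ = (a⁻¹ * b ^ ((u : ℤ) * m) * a⁻¹⁻¹) ^ (u : ℤ) := by rw [conj_zpow']
            _ = (b ^ m) ^ (u : ℤ) := by rw [inv_inv, hrev]
            _ = b ^ (m * (u : ℤ)) := by rw [← zpow_mul]
            _ = b ^ ((u : ℤ) * m) := by rw [mul_comm]
        have hchiinv : ((chi m n a⁻¹ : ℤˣ) : ℤ) = (u : ℤ) := by
          rw [map_inv, ← hu, inv_eq_of_mul_eq_one_right (Int.units_mul_self u)]
        simpa [hchiinv] using hkey }
  have hgen : ∀ j : Bool, (PresentedGroup.of j : BS m n) ∈ S := by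
    intro j
    cases j
    · show b * b ^ m * b⁻¹ = b ^ (((chi m n (bGen m n)) : ℤ) * m)
      have hcomm : b * b ^ m = b ^ m * b := ((Commute.refl b).zpow_right m).eq
      rw [hcomm, mul_assoc, mul_inv_cancel, mul_one, chi_b]
      norm_num
    · show tGen m n * b ^ m * (tGen m n)⁻¹ = b ^ (((chi m n (tGen m n)) : ℤ) * m)
      rw [t_conj, chi_t, eps_mul m n hmn]
  exact PresentedGroup.generated_by _ S hgen g

def Zc (m n : ℤ) : Subgroup (BS m n) := Subgroup.zpowers (bGen m n ^ m)

lemma Zc_normal (m n : ℤ) (hmn : n = m ∨ n = -m) : (Zc m n).Normal := by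
  constructor
  intro z hz g
  obtain ⟨j, rfl⟩ := Subgroup.mem_zpowers_iff.mp hz
  rw [conj_zpow', conj_bm m n hmn]
  rw [Zc, Subgroup.mem_zpowers_iff]
  refine ⟨(chi m n g : ℤ) * j, ?_⟩
  rw [← zpow_mul, ← zpow_mul]
  congr 1
  ring

lemma Zc_le_ker (m n : ℤ) : Zc m n ≤ (chi m n).ker := by
  intro z hz
  obtain ⟨j, rfl⟩ := Subgroup.mem_zpowers_iff.mp hz
  rw [MonoidHom.mem_ker, map_zpow, map_zpow, chi_b, one_zpow, one_zpow]

lemma ker_comm (m n : ℤ) (hmn : n = m ∨ n = -m) {h z : BS m n}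
    (hh : h ∈ (chi m n).ker) (hz : z ∈ Zc m n) : z * h = h * z := by
  obtain ⟨j, rfl⟩ := Subgroup.mem_zpowers_iff.mp hz
  have h1 : h * bGen m n ^ m * h⁻¹ = bGen m n ^ m := by
    rw [conj_bm m n hmn, MonoidHom.mem_ker.mp hh]
    norm_num
  have h2 : Commute h (bGen m n ^ m) := mul_inv_eq_iff_eq_mul.mp h1
  exact (h2.zpow_right j).symm.eq

/-! ### The free product quotient `BS(m,n)/⟨⟨b^m⟩⟩ ≅ ℤ/m * ℤ` -/

def Fac (m' : ℕ) : Bool → Type :=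
  fun i => Bool.rec (Multiplicative (ZMod m')) (Multiplicative ℤ) i

instance FacGroup (m' : ℕ) (i : Bool) : Group (Fac m' i) := by
  cases i
  · exact inferInstanceAs (Group (Multiplicative (ZMod m')))
  · exact inferInstanceAs (Group (Multiplicative ℤ))

instance FacDecEq (m' : ℕ) (i : Bool) : DecidableEq (Fac m' i) := by
  cases i
  · exact inferInstanceAs (DecidableEq (Multiplicative (ZMod m')))
  · exact inferInstanceAs (DecidableEq (Multiplicative ℤ))

def tau (m' : ℕ) : Fac m' true := Multiplicative.ofAdd (1 : ℤ)
def beta (m' : ℕ) : Fac m' false := Multiplicative.ofAdd (1 : ZMod m')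

lemma beta_zpow_eq_one (m' : ℕ) (k : ℤ) (hd : (m' : ℤ) ∣ k) : beta m' ^ k = 1 := by
  show (Multiplicative.ofAdd (1 : ZMod m')) ^ k = 1
  rw [← ofAdd_zsmul, zsmul_one]
  have hz : ((k : ℤ) : ZMod m') = 0 := (ZMod.intCast_zmod_eq_zero_iff_dvd k m').mpr hd
  rw [hz]; rfl

lemma tau_pow_ne_one (m' : ℕ) (N : ℕ) (hN : N ≠ 0) : tau m' ^ N ≠ 1 := by
  show (Multiplicative.ofAdd (1 : ℤ)) ^ N ≠ 1
  rw [← ofAdd_nsmul]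
  intro h
  have h2 : (N : ℕ) • (1 : ℤ) = 0 := Multiplicative.ofAdd.injective h
  simp at h2
  omega

lemma beta_ne_one (m' : ℕ) (h2 : 2 ≤ m') : beta m' ≠ 1 := by
  haveI : Fact (1 < m') := ⟨h2⟩
  show (Multiplicative.ofAdd (1 : ZMod m')) ≠ 1
  intro h
  have h3 : (1 : ZMod m') = 0 := Multiplicative.ofAdd.injective h
  exact one_ne_zero h3

/-- the projection `BS(m,n) → ℤ/|m| * ℤ` killing `b^m` -/
def qproj (m n : ℤ) (heq : m.natAbs = n.natAbs) : BS m n →* CoprodI (Fac m.natAbs) :=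
  PresentedGroup.toGroup
    (f := fun i => Bool.rec (CoprodI.of (beta m.natAbs)) (CoprodI.of (tau m.natAbs)) i)
    (by
      intro r hr
      rcases hr with rfl
      simp only [map_mul, map_inv, map_zpow, FreeGroup.lift_apply_of]
      show CoprodI.of (tau m.natAbs) * CoprodI.of (beta m.natAbs) ^ m *
        (CoprodI.of (tau m.natAbs))⁻¹ * (CoprodI.of (beta m.natAbs) ^ n)⁻¹ = 1
      rw [← map_zpow, ← map_zpow]
      rw [beta_zpow_eq_one m.natAbs m (Int.natAbs_dvd.mpr dvd_rfl),
        beta_zpow_eq_one m.natAbs n (by rw [heq]; exact Int.natAbs_dvd.mpr dvd_rfl)]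
      simp)

lemma qproj_b (m n : ℤ) (heq : m.natAbs = n.natAbs) :
    qproj m n heq (bGen m n) = CoprodI.of (beta m.natAbs) := by
  simpa [qproj, bGen] using PresentedGroup.toGroup.of (rels := BSrel m n) _ (x := false)

lemma qproj_t (m n : ℤ) (heq : m.natAbs = n.natAbs) :
    qproj m n heq (tGen m n) = CoprodI.of (tau m.natAbs) := by
  simpa [qproj, tGen] using PresentedGroup.toGroup.of (rels := BSrel m n) _ (x := true)

lemma gamma_ne_one (m n : ℤ) (heq : m.natAbs = n.natAbs) (h2 : 2 ≤ m.natAbs)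
    (N : ℕ) (hN : N ≠ 0) :
    tGen m n ^ N * (bGen m n * tGen m n ^ N * (bGen m n)⁻¹) * (tGen m n ^ N)⁻¹ *
      (bGen m n * tGen m n ^ N * (bGen m n)⁻¹)⁻¹ ≠ 1 := by
  intro h
  have himg := congrArg (qproj m n heq) h
  rw [map_one] at himg
  simp only [map_mul, map_inv, map_pow] at himg
  simp only [qproj_b m n heq, qproj_t m n heq] at himg
  simp only [← map_pow] at himg
  exact commutator_of_ne_one (by decide : (true : Bool) ≠ false)
    (tau_pow_ne_one m.natAbs N hN) (beta_ne_one m.natAbs h2) himg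

end BSaux

open BSaux Pointwise in
/-- If `|m| = |n| ≥ 2` and `Λ ≤ BS(m,n)` has infinite index but the `⟨b⟩`-action on
`Λ\BS(m,n)` has only finitely many orbits, then the right-translation action of
`BS(m,n)` on `Λ\BS(m,n)` is not faithful: its kernel is nontrivial. -/
theorem not_faithful_of_Cinfty (m n : ℤ) (heq : m.natAbs = n.natAbs)
    (h2 : 2 ≤ m.natAbs) (Λ : Subgroup (BS m n))
    (hinf : Infinite (rQuot Λ))
    (horb : ∃ s : Finset (rQuot Λ), ∀ x : rQuot Λ, ∃ y ∈ s, ∃ k : ℤ,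
      rAct Λ (bGen m n ^ k) y = x) :
    ∃ γ : BS m n, γ ≠ 1 ∧ ∀ x : rQuot Λ, rAct Λ γ x = x := by
  classical
  obtain ⟨s, hs⟩ := horb
  have hmn : n = m ∨ n = -m := by
    rcases Int.natAbs_eq_natAbs_iff.mp heq.symm with h | h
    · exact Or.inl h
    · exact Or.inr h
  set b := bGen m n with hbdef
  set Z := Zc m n with hZdef
  haveI hZN : Z.Normal := Zc_normal m n hmn
  set Λ' := Λ ⊔ Z with hΛ'def
  set M : ℤ := (m.natAbs : ℤ) with hMdef
  have hM : 0 < M := by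
    have : 2 ≤ m.natAbs := h2
    omega
  have hbM : b ^ M ∈ Z := by
    rcases Int.natAbs_eq m with h | h
    · rw [show M = m from h.symm]
      exact Subgroup.mem_zpowers _
    · rw [show M = -m by omega, zpow_neg]
      exact inv_mem (Subgroup.mem_zpowers _)
  -- `Λ ⊔ Z` has finite index
  let push : ℤ → rQuot Λ → Quotient (QuotientGroup.rightRel Λ') := fun r =>
    Quotient.map' (fun x => x * b ^ r) (by
      intro a a' hab
      rw [QuotientGroup.rightRel_apply] at hab ⊢
      have hkey : a' * b ^ r * (a * b ^ r)⁻¹ = a' * a⁻¹ := by group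
      rw [hkey]
      exact (le_sup_left : Λ ≤ Λ') hab)
  have hfin : Finite (Quotient (QuotientGroup.rightRel Λ')) := by
    have hFsurj : Function.Surjective
        (fun p : (↥s × Fin m.natAbs) => push ((p.2 : ℕ) : ℤ) p.1.1) := by
      intro q
      obtain ⟨g, rfl⟩ := Quotient.mk''_surjective q
      obtain ⟨y, hy, k, hk⟩ := hs (Quotient.mk'' g)
      obtain ⟨x₀, hx₀⟩ := Quotient.mk''_surjective y
      rw [← hx₀] at hk
      rw [show rAct Λ (b ^ k) (Quotient.mk'' x₀) = Quotient.mk'' (x₀ * b ^ k) from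
        Quotient.map'_mk'' _ _ _] at hk
      have hlam : g * (x₀ * b ^ k)⁻¹ ∈ Λ :=
        QuotientGroup.rightRel_apply.mp (Quotient.eq''.mp hk)
      have hr0 : 0 ≤ k % M := Int.emod_nonneg k (by omega)
      have hrM : k % M < M := Int.emod_lt_of_pos k hM
      refine ⟨⟨⟨y, hy⟩, ⟨(k % M).toNat, by omega⟩⟩, ?_⟩
      show push (((k % M).toNat : ℕ) : ℤ) y = Quotient.mk'' g
      rw [← hx₀]
      rw [show push (((k % M).toNat : ℕ) : ℤ) (Quotient.mk'' x₀) =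
        Quotient.mk'' (x₀ * b ^ (((k % M).toNat : ℕ) : ℤ)) from Quotient.map'_mk'' _ _ _]
      rw [show (((k % M).toNat : ℕ) : ℤ) = k % M by omega]
      apply Quotient.sound'
      rw [QuotientGroup.rightRel_apply]
      have hsplit : g * (x₀ * b ^ (k % M))⁻¹ =
          (g * (x₀ * b ^ k)⁻¹) * (x₀ * (b ^ M) ^ (k / M) * x₀⁻¹) := by
        have e1 : (b ^ M) ^ (k / M) = b ^ (M * (k / M)) := (zpow_mul b M (k / M)).symm
        have e2 : M * (k / M) = k - k % M := by
          have := Int.mul_ediv_add_emod k M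
          omega
        rw [e1, e2]
        group
      rw [hsplit]
      exact Subgroup.mul_mem _ ((le_sup_left : Λ ≤ Λ') hlam)
        ((le_sup_right : Z ≤ Λ') (hZN.conj_mem _ (Subgroup.zpow_mem _ hbM _) x₀))
    exact Finite.of_surjective _ hFsurj
  haveI : Finite (BS m n ⧸ Λ') :=
    Finite.of_equiv _ (QuotientGroup.quotientRightRelEquivQuotientLeftRel Λ')
  haveI : Λ'.FiniteIndex := ⟨Subgroup.index_ne_zero_of_finite⟩
  -- the finite-index normal subgroup `K`
  set K : Subgroup (BS m n) := Λ'.normalCore ⊓ (chi m n).ker with hKdef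
  haveI hKn : K.Normal := Subgroup.normal_inf_normal _ _
  haveI hKfi : K.FiniteIndex := inferInstance
  set N := K.index with hNdef
  have hN : N ≠ 0 := hKfi.index_ne_zero
  set x := tGen m n ^ N with hxdef
  have hxK : x ∈ K := Subgroup.pow_index_mem K (tGen m n)
  set y := b * x * b⁻¹ with hydef
  have hyK : y ∈ K := hKn.conj_mem x hxK b
  have hmem : ∀ g : BS m n, g * (x * y * x⁻¹ * y⁻¹) * g⁻¹ ∈ Λ := by
    intro g
    have hxcore : g * x * g⁻¹ ∈ Λ'.normalCore :=
      (Subgroup.normalCore_normal Λ').conj_mem _ (Subgroup.mem_inf.mp hxK).1 g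
    have hycore : g * y * g⁻¹ ∈ Λ'.normalCore :=
      (Subgroup.normalCore_normal Λ').conj_mem _ (Subgroup.mem_inf.mp hyK).1 g
    have hxker : g * x * g⁻¹ ∈ (chi m n).ker :=
      (MonoidHom.normal_ker _).conj_mem _ (Subgroup.mem_inf.mp hxK).2 g
    have hyker : g * y * g⁻¹ ∈ (chi m n).ker :=
      (MonoidHom.normal_ker _).conj_mem _ (Subgroup.mem_inf.mp hyK).2 g
    have hxset : g * x * g⁻¹ ∈ ((Λ : Set (BS m n)) * (Z : Set (BS m n))) := by
      rw [← Subgroup.mul_normal Λ Z]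
      exact Λ'.normalCore_le hxcore
    have hyset : g * y * g⁻¹ ∈ ((Λ : Set (BS m n)) * (Z : Set (BS m n))) := by
      rw [← Subgroup.mul_normal Λ Z]
      exact Λ'.normalCore_le hycore
    obtain ⟨a, ha, z₁, hz₁, haz⟩ := Set.mem_mul.mp hxset
    obtain ⟨c, hc, z₂, hz₂, hcz⟩ := Set.mem_mul.mp hyset
    have haker : a ∈ (chi m n).ker := by
      have he : a = (g * x * g⁻¹) * z₁⁻¹ := by rw [← haz]; group
      rw [he]
      exact mul_mem hxker (inv_mem (Zc_le_ker m n hz₁))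
    have hcker : c ∈ (chi m n).ker := by
      have he : c = (g * y * g⁻¹) * z₂⁻¹ := by rw [← hcz]; group
      rw [he]
      exact mul_mem hyker (inv_mem (Zc_le_ker m n hz₂))
    have hcomm1 : z₁ * c = c * z₁ := ker_comm m n hmn hcker hz₁
    have hcomm2 : z₁ * z₂ = z₂ * z₁ := ker_comm m n hmn (Zc_le_ker m n hz₂) hz₁
    have hcomm3 : z₂ * a = a * z₂ := ker_comm m n hmn haker hz₂
    have hexp : g * (x * y * x⁻¹ * y⁻¹) * g⁻¹ =
        (g * x * g⁻¹) * (g * y * g⁻¹) * (g * x * g⁻¹)⁻¹ * (g * y * g⁻¹)⁻¹ := by group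
    rw [hexp, ← haz, ← hcz, comm_aux a c z₁ z₂ hcomm1 hcomm2 hcomm3]
    exact mul_mem (mul_mem (mul_mem ha hc) (inv_mem ha)) (inv_mem hc)
  refine ⟨x * y * x⁻¹ * y⁻¹, ?_, ?_⟩
  · exact gamma_ne_one m n heq h2 N hN
  · intro q
    obtain ⟨g, rfl⟩ := Quotient.mk''_surjective q
    show rAct Λ (x * y * x⁻¹ * y⁻¹) (Quotient.mk'' g) = Quotient.mk'' g
    rw [show rAct Λ (x * y * x⁻¹ * y⁻¹) (Quotient.mk'' g) =
      Quotient.mk'' (g * (x * y * x⁻¹ * y⁻¹)) from Quotient.map'_mk'' _ _ _]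
    apply Quotient.sound'
    rw [QuotientGroup.rightRel_apply]
    have he : g * (g * (x * y * x⁻¹ * y⁻¹))⁻¹ = (g * (x * y * x⁻¹ * y⁻¹) * g⁻¹)⁻¹ := by
      group
    rw [he]
    exact inv_mem (hmem g)
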